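/- For all real numbers R ≥ 0 and C > 0, the infimum over β ∈ (0,1) of R/β + C/(2β(1−β)) equals R + C + √(2RC + C²). -/

import Mathlib

open Set

/-
Writing `a = R + C/2` and `b = C/2`, partial fractions turn the objective into `a/β + b/(1-β)`.
With `s = √a` and `t = √b`,
`s²/β + t²/(1-β) - (s+t)² = (s(1-β) - tβ)² / (β(1-β)) ≥ 0`,
with equality at `β = s/(s+t) ∈ (0,1)`; and `(s+t)² = a + b + √(4ab) = R + C + √(2RC + C²)`.
-/

theorem sq_add_le_sq_div_add_sq_div_one_sub (s t : ℝ) {β : ℝ} (hβ : β ∈ Ioo (0 : ℝ) 1) :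
    (s + t) ^ 2 ≤ s ^ 2 / β + t ^ 2 / (1 - β) := by
  obtain ⟨hβ0, hβ1⟩ := hβ
  have h1β : 0 < 1 - β := sub_pos.mpr hβ1
  have key : s ^ 2 / β + t ^ 2 / (1 - β) - (s + t) ^ 2 =
      (s * (1 - β) - t * β) ^ 2 / (β * (1 - β)) := by
    field_simp
    ring
  have : 0 ≤ (s * (1 - β) - t * β) ^ 2 / (β * (1 - β)) := by positivity
  linarith

theorem sq_div_add_sq_div_one_sub_at_ratio (s t : ℝ) (hst : s + t ≠ 0) :
    s ^ 2 / (s / (s + t)) + t ^ 2 / (1 - s / (s + t)) = (s + t) ^ 2 := by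
  have h1 : 1 - s / (s + t) = t / (s + t) := by field_simp; ring
  have cancel : ∀ x : ℝ, x ^ 2 / (x / (s + t)) = x * (s + t) := fun x => by
    rcases eq_or_ne x 0 with rfl | hx
    · simp
    · field_simp
  rw [h1, cancel, cancel]
  ring

theorem isLeast_div_add_div_one_sub {a b : ℝ} (ha : 0 < a) (hb : 0 < b) :
    IsLeast ((fun β => a / β + b / (1 - β)) '' Ioo (0 : ℝ) 1) ((√a + √b) ^ 2) := by
  set s := √a
  set t := √b
  have hs : 0 < s := Real.sqrt_pos.mpr ha
  have ht : 0 < t := Real.sqrt_pos.mpr hb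
  have hsq : ∀ β, a / β + b / (1 - β) = s ^ 2 / β + t ^ 2 / (1 - β) := fun β => by
    rw [Real.sq_sqrt ha.le, Real.sq_sqrt hb.le]
  simp only [hsq]
  refine ⟨⟨s / (s + t), ⟨by positivity, ?_⟩, sq_div_add_sq_div_one_sub_at_ratio s t (by positivity)⟩, ?_⟩
  · rw [div_lt_one (by positivity)]
    linarith
  · rintro _ ⟨β, hβ, rfl⟩
    exact sq_add_le_sq_div_add_sq_div_one_sub s t hβ

theorem sqrt_add_sqrt_sq {a b : ℝ} (ha : 0 ≤ a) (hb : 0 ≤ b) :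
    (√a + √b) ^ 2 = a + b + √(4 * a * b) := by
  rw [add_sq, Real.sq_sqrt ha, Real.sq_sqrt hb, show 4 * a * b = 2 ^ 2 * (a * b) by ring,
    Real.sqrt_mul (by norm_num), Real.sqrt_sq zero_le_two, Real.sqrt_mul ha]
  ring

theorem inf_linear_pac_bayes_over_beta (R C : ℝ) (hR : 0 ≤ R) (hC : 0 < C) :
    sInf ((fun β => R / β + C / (2 * β * (1 - β))) '' Ioo (0 : ℝ) 1) =
      R + C + Real.sqrt (2 * R * C + C ^ 2) := by
  have partial_fractions : EqOn (fun β => R / β + C / (2 * β * (1 - β)))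
      (fun β => (R + C / 2) / β + (C / 2) / (1 - β)) (Ioo 0 1) := by
    rintro β ⟨hβ0, hβ1⟩
    have : 1 - β ≠ 0 := sub_ne_zero.mpr hβ1.ne'
    field_simp
    ring
  rw [image_congr partial_fractions,
    (isLeast_div_add_div_one_sub (by positivity) (by positivity)).csInf_eq,
    sqrt_add_sqrt_sq (by positivity) (by positivity)]
  ring_nf
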